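/- For all integers r ≥ 1 and l ≥ 1, the rational number (l(r−l))! · (∏_{k=1}^{l−1} k!) / ((r−l)! · ∏_{k=1}^{l−1} (r−l+k)!) is a positive integer, provided l ≤ r. -/

import Mathlib

open Finset

/-- Key exact identity for the sum of indicator terms. -/
lemma indicator_sum_identity (q b : ℕ) (hq : 0 < q) (hb : b < q) (l : ℕ) :
    (∑ k ∈ range l, (b + k % q) / q) * q +
      (if l % q + b ≤ q then (l % q) * b else (q - l % q) * (q - b)) = l * b := by
  induction l with
  | zero => simp [Nat.le_of_lt hb]
  | succ l ih =>
    rcases Nat.eq_zero_or_pos b with hb0 | hb1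
    · subst hb0
      have h1 : ∀ k : ℕ, (0 + k % q) / q = 0 := fun k => by
        rw [Nat.zero_add]; exact Nat.div_eq_of_lt (Nat.mod_lt _ hq)
      simp [h1, Nat.le_of_lt (Nat.mod_lt (l+1) hq)]
    · have hq2 : 2 ≤ q := by omega
      set d := l % q with hd
      have hdlt : d < q := Nat.mod_lt _ hq
      have hmod : (l + 1) % q = (d + 1) % q := by
        conv_lhs => rw [Nat.add_mod, ← hd, Nat.mod_eq_of_lt (by omega : (1:ℕ) < q)]
      have hbd : (b + d) / q = if b + d < q then 0 else 1 := by
        split_ifs with h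
        · exact Nat.div_eq_of_lt h
        · exact Nat.div_eq_of_lt_le (by omega) (by omega)
      rw [Finset.sum_range_succ, Nat.add_mul, hmod, hbd]
      set S := (∑ k ∈ range l, (b + k % q) / q) * q with hS
      rcases Nat.lt_or_ge (d + 1) q with hd1 | hd1
      · rw [Nat.mod_eq_of_lt hd1]
        rcases Nat.lt_or_ge (b + d) q with h | h
        · rw [if_pos h, if_pos (by omega : d + 1 + b ≤ q)]
          rw [if_pos (by omega : d + b ≤ q)] at ih
          have e : (d + 1) * b = d * b + b := by ring
          linarith
        · rw [if_neg (by omega : ¬ b + d < q), if_neg (by omega : ¬ d + 1 + b ≤ q)]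
          rcases Nat.lt_or_ge q (d + b) with h2 | h2
          · rw [if_neg (by omega : ¬ d + b ≤ q)] at ih
            have e : (q - d) * (q - b) = (q - (d+1)) * (q - b) + (q - b) := by
              rw [show q - d = (q - (d+1)) + 1 by omega, add_mul, one_mul]
            have e2 : b + (q - b) = q := by omega
            linarith
          · -- d + b = q
            rw [if_pos (by omega : d + b ≤ q)] at ih
            have e : (q - (d+1)) * (q - b) = (b - 1) * d := by
              rw [show q - (d+1) = b - 1 by omega, show q - b = d by omega]
            have e2 : d * b = (b - 1) * d + d := by
              rw [show d * b = (b - 1 + 1) * d by rw [show b - 1 + 1 = b by omega, mul_comm],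
                add_mul, one_mul]
            linarith
      · have hdq : d + 1 = q := by omega
        rw [show (d + 1) % q = 0 by rw [hdq, Nat.mod_self],
          if_pos (by omega : 0 + b ≤ q), Nat.zero_mul]
        rcases Nat.lt_or_ge (b + d) q with h | h
        · omega
        · rw [if_neg (by omega : ¬ b + d < q)]
          rcases Nat.lt_or_ge q (d + b) with h2 | h2
          · rw [if_neg (by omega : ¬ d + b ≤ q)] at ih
            have e : (q - d) * (q - b) = q - b := by rw [show q - d = 1 by omega, one_mul]
            have e2 : b + (q - b) = q := by omega
            linarith
          · rw [if_pos (by omega : d + b ≤ q)] at ih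
            have e : d * b = d := by rw [show b = 1 by omega, mul_one]
            linarith

/-- Per-`q` floor inequality. -/
lemma key_floor_ineq (l m q : ℕ) :
    ∑ k ∈ range l, (m + k) / q ≤ l * m / q + ∑ k ∈ range l, k / q := by
  rcases Nat.eq_zero_or_pos q with hq | hq
  · simp [hq]
  · set b := m % q with hb
    have hblt : b < q := Nat.mod_lt _ hq
    have hsplit : ∀ k, (m + k) / q = m / q + k / q + (b + k % q) / q := by
      intro k
      rw [Nat.add_div hq]
      congr 1
      split_ifs with h
      · exact (Nat.div_eq_of_lt_le (by omega) (by have := Nat.mod_lt k hq; omega)).symm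
      · exact (Nat.div_eq_of_lt (by have := Nat.mod_lt k hq; omega)).symm
    calc ∑ k ∈ range l, (m + k) / q
        = l * (m / q) + ∑ k ∈ range l, k / q + ∑ k ∈ range l, (b + k % q) / q := by
          simp only [hsplit, Finset.sum_add_distrib, Finset.sum_const, card_range, smul_eq_mul]
      _ ≤ l * (m / q) + ∑ k ∈ range l, k / q + l * b / q := by
          gcongr
          rw [Nat.le_div_iff_mul_le hq]
          have := indicator_sum_identity q b hq hblt l
          omega
      _ ≤ l * m / q + ∑ k ∈ range l, k / q := by
          have : l * (m / q) + l * b / q ≤ l * m / q := by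
            have hm : l * m = l * b + l * (m / q) * q := by
              conv_lhs => rw [← Nat.div_add_mod m q]
              ring
            rw [hm, Nat.add_mul_div_right _ _ hq]
            omega
          omega

/-- Main divisibility: the denominator of Schubert's formula divides the numerator. -/
lemma schubert_dvd (l m : ℕ) :
    (∏ k ∈ range l, (m + k).factorial) ∣
      (l * m).factorial * ∏ k ∈ range l, k.factorial := by
  have hD : ∀ x ∈ range l, (m + x).factorial ≠ 0 := fun x _ => (Nat.factorial_pos _).ne'
  have hN : ∀ x ∈ range l, (x).factorial ≠ 0 := fun x _ => (Nat.factorial_pos _).ne'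
  rw [← Nat.factorization_le_iff_dvd (Finset.prod_ne_zero_iff.mpr hD)
    (mul_ne_zero (Nat.factorial_pos _).ne' (Finset.prod_ne_zero_iff.mpr hN))]
  intro p
  rcases em p.Prime with hp | hp
  · haveI : Fact p.Prime := ⟨hp⟩
    set b := Nat.log p ((l + 1) * (m + 1)) + 1 with hbdef
    have hlog : ∀ n : ℕ, n ≤ (l + 1) * (m + 1) → Nat.log p n < b := fun n hn =>
      Nat.lt_succ_of_le (Nat.log_mono_right hn)
    have hfac : ∀ n : ℕ, n ≤ (l + 1) * (m + 1) →
        (n.factorial).factorization p = ∑ i ∈ Finset.Ico 1 b, n / p ^ i := fun n hn => by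
      rw [Nat.factorization_def _ hp, padicValNat_factorial (hlog n hn)]
    have hb1 : ∀ k ∈ range l, m + k ≤ (l + 1) * (m + 1) := by
      intro k hk; rw [Finset.mem_range] at hk; nlinarith
    have hb2 : ∀ k ∈ range l, k ≤ (l + 1) * (m + 1) := by
      intro k hk; rw [Finset.mem_range] at hk; nlinarith
    have hb3 : l * m ≤ (l + 1) * (m + 1) := by nlinarith
    rw [Nat.factorization_prod hD, Nat.factorization_mul (Nat.factorial_pos _).ne'
      (Finset.prod_ne_zero_iff.mpr hN), Nat.factorization_prod hN]
    simp only [Finsupp.coe_add, Pi.add_apply, Finsupp.finset_sum_apply]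
    calc ∑ k ∈ range l, ((m + k).factorial).factorization p
        = ∑ k ∈ range l, ∑ i ∈ Finset.Ico 1 b, (m + k) / p ^ i := by
          exact Finset.sum_congr rfl fun k hk => hfac _ (hb1 k hk)
      _ = ∑ i ∈ Finset.Ico 1 b, ∑ k ∈ range l, (m + k) / p ^ i := Finset.sum_comm
      _ ≤ ∑ i ∈ Finset.Ico 1 b, (l * m / p ^ i + ∑ k ∈ range l, k / p ^ i) :=
          Finset.sum_le_sum fun i _ => key_floor_ineq l m (p ^ i)
      _ = ((l * m).factorial).factorization p + ∑ k ∈ range l, ((k).factorial).factorization p := by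
          rw [Finset.sum_add_distrib, hfac _ hb3, Finset.sum_comm]
          congr 1
          exact (Finset.sum_congr rfl fun k hk => (hfac _ (hb2 k hk)).symm)
  · simp [Nat.factorization_eq_zero_of_not_prime _ hp]

theorem schubert_degree_is_positive_integer (r l : ℕ) (hr : 1 ≤ r) (hl : 1 ≤ l)
    (hlr : l ≤ r) :
    ∃ n : ℕ, 0 < n ∧
      (((l * (r - l)).factorial : ℚ) * ∏ k ∈ Finset.Icc 1 (l - 1), (Nat.factorial k : ℚ)) /
          ((r - l).factorial * ∏ k ∈ Finset.Icc 1 (l - 1), ((r - l + k).factorial : ℚ))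
        = n := by
  set m := r - l with hm
  have hIcc : Finset.Icc 1 (l - 1) = Finset.Ico 1 l := by
    rw [← Finset.Ico_add_one_right_eq_Icc]; congr 1; omega
  have hprod : ∀ g : ℕ → ℕ, ∏ k ∈ range l, g k = g 0 * ∏ k ∈ Finset.Icc 1 (l - 1), g k := by
    intro g
    rw [hIcc, Finset.range_eq_Ico, Finset.prod_eq_prod_Ico_succ_bot hl]
  set D : ℕ := m.factorial * ∏ k ∈ Finset.Icc 1 (l - 1), (m + k).factorial with hD
  set N : ℕ := (l * m).factorial * ∏ k ∈ Finset.Icc 1 (l - 1), (k).factorial with hN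
  have hdvd : D ∣ N := by
    have h1 : D = ∏ k ∈ range l, (m + k).factorial := by
      rw [hD, hprod fun k => (m + k).factorial]; simp
    have h2 : N = (l * m).factorial * ∏ k ∈ range l, (k).factorial := by
      rw [hN, hprod fun k => (k).factorial]; simp
    rw [h1, h2]; exact schubert_dvd l m
  have hDpos : 0 < D := Nat.mul_pos (Nat.factorial_pos _)
    (Finset.prod_pos fun k _ => Nat.factorial_pos _)
  have hNpos : 0 < N := Nat.mul_pos (Nat.factorial_pos _)
    (Finset.prod_pos fun k _ => Nat.factorial_pos _)
  refine ⟨N / D, Nat.div_pos (Nat.le_of_dvd hNpos hdvd) hDpos, ?_⟩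
  have hcast : ((N / D : ℕ) : ℚ) * (D : ℚ) = (N : ℚ) := by
    rw [← Nat.cast_mul, Nat.div_mul_cancel hdvd]
  have h1 : ((N : ℕ) : ℚ) = ((l * m).factorial : ℚ) * ∏ k ∈ Finset.Icc 1 (l - 1), (Nat.factorial k : ℚ) := by
    rw [hN]; push_cast; ring
  have h2 : ((D : ℕ) : ℚ) = ((m).factorial : ℚ) * ∏ k ∈ Finset.Icc 1 (l - 1), ((m + k).factorial : ℚ) := by
    rw [hD]; push_cast; ring
  rw [div_eq_iff (by rw [← h2]; exact_mod_cast hDpos.ne')]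
  rw [← h1, ← h2, ← hcast]
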